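/- Let Λ be a convex generator with Î(Λ) = Î(e_{a,b}) for relatively prime positive integers a,b, where Î(Λ) = 2(L̂(Λ)−1) − h(Λ). Suppose x(Λ) ≤ a, y(Λ) ≤ b, and suppose there exists an integer g ≥ 0 with 2(x(Λ) − a + y(Λ) − b) + e(Λ) − 1 ≥ 2g − 1 + e(Λ) + h(Λ). Then g = 0, h(Λ) = 0, x(Λ) = a, y(Λ) = b, L̂(Λ) = L̂(e_{a,b}), and Λ = e_{a,b} (i.e. Λ is the single 'e'-labeled edge from (0,b) to (a,0)). -/

import Mathlib

/-- A convex integral path with `e`/`h` edge labels ("convex generator"), encoded by its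
lattice-point vertices `P 0 = (0, y(Λ)), …, P n = (x(Λ), 0)`.
`label i = true` means the `i`-th edge is labeled `h`; `false` means `e`. -/
structure ConvexGenerator where
  n : ℕ
  P : Fin (n + 1) → ℤ × ℤ
  label : Fin n → Bool
  startX : (P 0).1 = 0
  endY : (P (Fin.last n)).2 = 0
  y_nonneg : 0 ≤ (P 0).2
  x_nonneg : 0 ≤ (P (Fin.last n)).1
  mono : ∀ i : Fin n, (P i.castSucc).1 ≤ (P i.succ).1 ∧ (P i.succ).2 ≤ (P i.castSucc).2
  nondeg : ∀ i : Fin n, P i.castSucc ≠ P i.succ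
  slope : ∀ i j : Fin n, i < j →
    ((P i.castSucc).2 - (P i.succ).2) * ((P j.succ).1 - (P j.castSucc).1) <
      ((P j.castSucc).2 - (P j.succ).2) * ((P i.succ).1 - (P i.castSucc).1)
  axisE : ∀ i : Fin n,
    ((P i.succ).1 = (P i.castSucc).1 ∨ (P i.succ).2 = (P i.castSucc).2) → label i = false

namespace ConvexGenerator

variable (Λ : ConvexGenerator)

def x : ℤ := (Λ.P (Fin.last Λ.n)).1
def y : ℤ := (Λ.P 0).2
/-- horizontal run of the `i`-th edge -/
def run (i : Fin Λ.n) : ℤ := (Λ.P i.succ).1 - (Λ.P i.castSucc).1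
/-- vertical drop of the `i`-th edge -/
def drop (i : Fin Λ.n) : ℤ := (Λ.P i.castSucc).2 - (Λ.P i.succ).2
/-- the vector `v^⊥` associated to the `i`-th edge -/
def perp (i : Fin Λ.n) : ℤ × ℤ := (Λ.run i, Λ.drop i)
/-- the multiplicity of the `i`-th edge -/
def mult (i : Fin Λ.n) : ℕ := Int.gcd (Λ.run i) (Λ.drop i)
/-- the number of edges labeled `h` -/
def hCount : ℕ := (Finset.univ.filter fun i => Λ.label i = true).card
/-- the number of edges labeled `e`, or labeled `h` with multiplicity `> 1` -/
def eCount : ℕ := (Finset.univ.filter fun i => Λ.label i = false ∨ 1 < Λ.mult i).card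
/-- the lattice points in the region bounded by `Λ` and the two axes -/
def region : Set (ℤ × ℤ) :=
  {q | 0 ≤ q.1 ∧ 0 ≤ q.2 ∧
    ((q.1 = 0 ∧ q.2 ≤ Λ.y) ∨ ∃ i : Fin Λ.n,
      (Λ.P i.castSucc).1 ≤ q.1 ∧ q.1 ≤ (Λ.P i.succ).1 ∧ q.2 ≤ (Λ.P i.castSucc).2 ∧
      Λ.drop i * q.1 + Λ.run i * q.2 ≤
        Λ.drop i * (Λ.P i.castSucc).1 + Λ.run i * (Λ.P i.castSucc).2)}
/-- the number `L̂(Λ)` of lattice points in the region bounded by `Λ` and the axes -/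
noncomputable def Lhat : ℕ := Λ.region.ncard
/-- the combinatorial ECH index `Î(Λ)` -/
noncomputable def Ihat : ℤ := 2 * ((Λ.Lhat : ℤ) - 1) - (Λ.hCount : ℤ)
/-- the combinatorial index `Ĵ₀(Λ)` -/
noncomputable def J0hat : ℤ := Λ.Ihat - 2 * Λ.x - 2 * Λ.y - (Λ.eCount : ℤ)

end ConvexGenerator

/-- the convex generator `e_{a,b}`: the single `e`-labeled edge from `(0,b)` to `(a,0)` -/
def eGen (a b : ℤ) (ha : 0 < a) (hb : 0 < b) : ConvexGenerator where
  n := 1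
  P := fun i => if (i : ℕ) = 0 then ((0 : ℤ), b) else (a, 0)
  label := fun _ => false
  startX := rfl
  endY := rfl
  y_nonneg := hb.le
  x_nonneg := ha.le
  mono := by
    intro i
    fin_cases i
    constructor <;> simp <;> omega
  nondeg := by
    intro i
    fin_cases i
    simp [Prod.ext_iff]
    omega
  slope := by
    intro i j hij
    fin_cases i <;> fin_cases j <;> simp at hij
  axisE := by
    intro i _
    rfl


section Aux

private lemma ivt_aux (X : ℕ → ℤ) (p : ℤ) :
    ∀ n : ℕ, 1 ≤ n → X 0 ≤ p → p ≤ X n → (∀ k, X k ≤ X (k + 1)) →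
      ∃ k, k < n ∧ X k ≤ p ∧ p ≤ X (k + 1) := by
  intro n
  induction n with
  | zero => omega
  | succ m ih =>
    intro _ h0 hn hmono
    rcases Nat.eq_zero_or_pos m with hm | hm
    · subst hm; exact ⟨0, by omega, h0, hn⟩
    · by_cases hp : p ≤ X m
      · obtain ⟨k, hk, h1, h2⟩ := ih hm h0 hp hmono
        exact ⟨k, by omega, h1, h2⟩
      · exact ⟨m, by omega, by linarith, hn⟩

private lemma ascent_aux (F t : ℕ → ℤ) (hF : ∀ i, F (i + 1) = F i + t i) :
    ∀ k, (∀ i, i < k → 0 < t i) → F 0 ≤ F k := by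
  intro k
  induction k with
  | zero => intro _; exact le_rfl
  | succ m ih =>
    intro h
    have h1 := ih (fun i hi => h i (by omega))
    have h2 := h m (by omega)
    rw [hF]; linarith

private lemma descent_aux (F t : ℕ → ℤ) (hF : ∀ i, F (i + 1) = F i + t i) :
    ∀ n k, k ≤ n → (∀ i, k ≤ i → i < n → t i ≤ 0) → F n ≤ F k := by
  intro n
  induction n with
  | zero => intro k hk _; rw [Nat.le_zero.mp hk]
  | succ m ih =>
    intro k hk h
    rcases Nat.eq_or_lt_of_le hk with he | hl
    · rw [he]
    · have h1 := ih k (by omega) (fun i h1 h2 => h i h1 (by omega))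
      have h2 := h m (by omega) (by omega)
      rw [hF]; linarith

private lemma descent_strict_aux (F t : ℕ → ℤ) (hF : ∀ i, F (i + 1) = F i + t i) :
    ∀ n k, k < n → (∀ i, k ≤ i → i < n → t i < 0) → F n < F k := by
  intro n
  induction n with
  | zero => omega
  | succ m ih =>
    intro k hk h
    rcases Nat.eq_or_lt_of_le (Nat.lt_succ_iff.mp hk) with he | hl
    · subst he; rw [hF]; have := h k (by omega) (by omega); linarith
    · have h1 := ih k hl (fun i h1 h2 => h i h1 (by omega))
      have h2 := h m (by omega) (by omega)
      rw [hF]; linarith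

namespace ConvexGenerator

variable (Λ : ConvexGenerator)

/-- clamped x-coordinate of the `k`-th vertex -/
def Xc (k : ℕ) : ℤ := (Λ.P ⟨min k Λ.n, Nat.lt_succ_of_le (min_le_right _ _)⟩).1
/-- clamped y-coordinate of the `k`-th vertex -/
def Yc (k : ℕ) : ℤ := (Λ.P ⟨min k Λ.n, Nat.lt_succ_of_le (min_le_right _ _)⟩).2

lemma Xc_zero : Λ.Xc 0 = 0 := by
  have : (⟨min 0 Λ.n, Nat.lt_succ_of_le (min_le_right _ _)⟩ : Fin (Λ.n + 1)) = 0 := by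
    apply Fin.ext; simp
  rw [Xc, this, Λ.startX]

lemma Yc_zero : Λ.Yc 0 = Λ.y := by
  have : (⟨min 0 Λ.n, Nat.lt_succ_of_le (min_le_right _ _)⟩ : Fin (Λ.n + 1)) = 0 := by
    apply Fin.ext; simp
  rw [Yc, this, y]

lemma Xc_of_le {k : ℕ} (h : Λ.n ≤ k) : Λ.Xc k = Λ.x := by
  have : (⟨min k Λ.n, Nat.lt_succ_of_le (min_le_right _ _)⟩ : Fin (Λ.n + 1)) = Fin.last Λ.n := by
    apply Fin.ext; simp [Fin.val_last]; omega
  rw [Xc, this, x]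

lemma Yc_of_le {k : ℕ} (h : Λ.n ≤ k) : Λ.Yc k = 0 := by
  have : (⟨min k Λ.n, Nat.lt_succ_of_le (min_le_right _ _)⟩ : Fin (Λ.n + 1)) = Fin.last Λ.n := by
    apply Fin.ext; simp [Fin.val_last]; omega
  rw [Yc, this, Λ.endY]

lemma P_cs {k : ℕ} (hk : k < Λ.n) :
    Λ.P (Fin.castSucc ⟨k, hk⟩) = (Λ.Xc k, Λ.Yc k) := by
  have : (Fin.castSucc (⟨k, hk⟩ : Fin Λ.n)) =
      (⟨min k Λ.n, Nat.lt_succ_of_le (min_le_right _ _)⟩ : Fin (Λ.n + 1)) := by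
    apply Fin.ext; simp [Fin.coe_castSucc]; omega
  rw [this, Xc, Yc]

lemma P_s {k : ℕ} (hk : k < Λ.n) :
    Λ.P (Fin.succ ⟨k, hk⟩) = (Λ.Xc (k + 1), Λ.Yc (k + 1)) := by
  have : (Fin.succ (⟨k, hk⟩ : Fin Λ.n)) =
      (⟨min (k + 1) Λ.n, Nat.lt_succ_of_le (min_le_right _ _)⟩ : Fin (Λ.n + 1)) := by
    apply Fin.ext; simp [Fin.val_succ]; omega
  rw [this, Xc, Yc]

lemma Xc_step (k : ℕ) : Λ.Xc k ≤ Λ.Xc (k + 1) := by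
  rcases lt_or_ge k Λ.n with hk | hk
  · have h := (Λ.mono ⟨k, hk⟩).1
    rw [Λ.P_cs hk, Λ.P_s hk] at h
    exact h
  · rw [Λ.Xc_of_le hk, Λ.Xc_of_le (by omega)]

lemma Yc_step (k : ℕ) : Λ.Yc (k + 1) ≤ Λ.Yc k := by
  rcases lt_or_ge k Λ.n with hk | hk
  · have h := (Λ.mono ⟨k, hk⟩).2
    rw [Λ.P_cs hk, Λ.P_s hk] at h
    exact h
  · rw [Λ.Yc_of_le hk, Λ.Yc_of_le (by omega)]

lemma Xc_mono : Monotone Λ.Xc := monotone_nat_of_le_succ Λ.Xc_step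

lemma Yc_anti : Antitone Λ.Yc := antitone_nat_of_succ_le Λ.Yc_step

end ConvexGenerator

end Aux


section Aux2

namespace ConvexGenerator

variable (Λ : ConvexGenerator)

lemma run_eq {k : ℕ} (hk : k < Λ.n) : Λ.run ⟨k, hk⟩ = Λ.Xc (k + 1) - Λ.Xc k := by
  rw [run, Λ.P_cs hk, Λ.P_s hk]

lemma drop_eq {k : ℕ} (hk : k < Λ.n) : Λ.drop ⟨k, hk⟩ = Λ.Yc k - Λ.Yc (k + 1) := by
  rw [drop, Λ.P_cs hk, Λ.P_s hk]

lemma slope' {k l : ℕ} (hkl : k < l) (hl : l < Λ.n) :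
    (Λ.Yc k - Λ.Yc (k + 1)) * (Λ.Xc (l + 1) - Λ.Xc l) <
      (Λ.Yc l - Λ.Yc (l + 1)) * (Λ.Xc (k + 1) - Λ.Xc k) := by
  have hk : k < Λ.n := lt_trans hkl hl
  have h := Λ.slope ⟨k, hk⟩ ⟨l, hl⟩ (by exact Fin.mk_lt_mk.mpr hkl)
  rw [Λ.P_cs hk, Λ.P_s hk, Λ.P_cs hl, Λ.P_s hl] at h
  exact h

lemma run_pos {k l : ℕ} (hkl : k < l) (hl : l < Λ.n) : 0 < Λ.Xc (k + 1) - Λ.Xc k := by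
  have hk : k < Λ.n := lt_trans hkl hl
  have hr := Λ.Xc_step k
  rcases lt_or_ge (Λ.Xc k) (Λ.Xc (k + 1)) with h | h
  · omega
  · exfalso
    have hre : Λ.Xc (k + 1) = Λ.Xc k := le_antisymm h hr
    have hnd := Λ.nondeg ⟨k, hk⟩
    rw [Λ.P_cs hk, Λ.P_s hk] at hnd
    simp only [ne_eq, Prod.mk.injEq, not_and] at hnd
    have hd : 0 < Λ.Yc k - Λ.Yc (k + 1) := by
      have h1 := hnd hre.symm
      have := Λ.Yc_step k
      omega
    have hs := Λ.slope' hkl hl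
    have hrl := Λ.Xc_step l
    have hdl := Λ.Yc_step l
    nlinarith

/-- every vertex of the path lies weakly above the chord -/
lemma above_chord (hA : 0 < Λ.x) (hB : 0 < Λ.y) (k : ℕ) :
    Λ.x * Λ.y ≤ Λ.y * Λ.Xc k + Λ.x * Λ.Yc k := by
  set A := Λ.x with hAdef
  set B := Λ.y with hBdef
  set F : ℕ → ℤ := fun m => B * Λ.Xc m + A * Λ.Yc m with hFdef
  set t : ℕ → ℤ := fun m => F (m + 1) - F m with htdef
  have hF : ∀ i, F (i + 1) = F i + t i := fun i => by simp [htdef]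
  have hF0 : F 0 = A * B := by simp [hFdef, Λ.Xc_zero, Λ.Yc_zero]; exact Or.inl hBdef.symm
  have hFn : ∀ m, Λ.n ≤ m → F m = A * B := fun m hm => by
    simp [hFdef, Λ.Xc_of_le hm, Λ.Yc_of_le hm]; ring
  have htsign : ∀ i j, i < j → j < Λ.n → t i ≤ 0 → t j < 0 := by
    intro i j hij hj hti
    have hri := Λ.run_pos hij hj
    have hs := Λ.slope' hij hj
    have hrj : 0 ≤ Λ.Xc (j + 1) - Λ.Xc j := by have := Λ.Xc_step j; omega
    have hdi : 0 ≤ Λ.Yc i - Λ.Yc (i + 1) := by have := Λ.Yc_step i; omega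
    have hti' : B * (Λ.Xc (i + 1) - Λ.Xc i) ≤ A * (Λ.Yc i - Λ.Yc (i + 1)) := by
      simp only [htdef, hFdef] at hti; nlinarith [hti]
    show F (j + 1) - F j < 0
    have : B * (Λ.Xc (j + 1) - Λ.Xc j) < A * (Λ.Yc j - Λ.Yc (j + 1)) := by
      nlinarith [mul_le_mul_of_nonneg_right hti' hrj,
        mul_lt_mul_of_pos_left hs hA]
    simp only [hFdef]; nlinarith [this]
  suffices h : ∀ m, m ≤ Λ.n → A * B ≤ F m by
    rcases le_or_gt k Λ.n with hk | hk
    · have := h k hk; simp only [hFdef] at this; linarith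
    · have := hFn k hk.le; simp only [hFdef] at this; linarith
  intro m hm
  by_cases hall : ∀ i, i < m → 0 < t i
  · have := ascent_aux F t hF m hall
    omega
  · push_neg at hall
    obtain ⟨i, him, hti⟩ := hall
    have := descent_aux F t hF Λ.n m hm
      (fun j h1 h2 => (htsign i j (by omega) h2 hti).le)
    have := hFn Λ.n le_rfl
    omega

/-- if the path has at least two edges, its second vertex lies strictly above the chord -/
lemma first_vertex (hA : 0 < Λ.x) (hB : 0 < Λ.y) (hn : 2 ≤ Λ.n) :
    Λ.x * Λ.y < Λ.y * Λ.Xc 1 + Λ.x * Λ.Yc 1 := by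
  set A := Λ.x with hAdef
  set B := Λ.y with hBdef
  set F : ℕ → ℤ := fun m => B * Λ.Xc m + A * Λ.Yc m with hFdef
  set t : ℕ → ℤ := fun m => F (m + 1) - F m with htdef
  have hF : ∀ i, F (i + 1) = F i + t i := fun i => by simp [htdef]
  have hF0 : F 0 = A * B := by simp [hFdef, Λ.Xc_zero, Λ.Yc_zero]; exact Or.inl hBdef.symm
  have hFn : F Λ.n = A * B := by
    simp [hFdef, Λ.Xc_of_le le_rfl, Λ.Yc_of_le le_rfl]; ring
  have htsign : ∀ i j, i < j → j < Λ.n → t i ≤ 0 → t j < 0 := by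
    intro i j hij hj hti
    have hri := Λ.run_pos hij hj
    have hs := Λ.slope' hij hj
    have hrj : 0 ≤ Λ.Xc (j + 1) - Λ.Xc j := by have := Λ.Xc_step j; omega
    have hdi : 0 ≤ Λ.Yc i - Λ.Yc (i + 1) := by have := Λ.Yc_step i; omega
    have hti' : B * (Λ.Xc (i + 1) - Λ.Xc i) ≤ A * (Λ.Yc i - Λ.Yc (i + 1)) := by
      simp only [htdef, hFdef] at hti; nlinarith [hti]
    show F (j + 1) - F j < 0
    have : B * (Λ.Xc (j + 1) - Λ.Xc j) < A * (Λ.Yc j - Λ.Yc (j + 1)) := by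
      nlinarith [mul_le_mul_of_nonneg_right hti' hrj,
        mul_lt_mul_of_pos_left hs hA]
    simp only [hFdef]; nlinarith [this]
  by_contra hcon
  push_neg at hcon
  have hFone : F 1 = F 0 + t 0 := hF 0
  have ht0 : t 0 ≤ 0 := by
    have : F 1 ≤ A * B := by simp only [hFdef]; linarith
    omega
  have := descent_strict_aux F t hF Λ.n 1 (by omega)
    (fun j h1 h2 => htsign 0 j (by omega) h2 ht0)
  have hFn' : F Λ.n = A * B := hFn
  omega

end ConvexGenerator

end Aux2


section Aux3

namespace ConvexGenerator

variable (Λ : ConvexGenerator)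

lemma mem_region_of {k : ℕ} (hk : k < Λ.n) (p q : ℤ) (h0p : 0 ≤ p) (h0q : 0 ≤ q)
    (h1 : Λ.Xc k ≤ p) (h2 : p ≤ Λ.Xc (k + 1)) (h3 : q ≤ Λ.Yc k)
    (h4 : (Λ.Yc k - Λ.Yc (k + 1)) * p + (Λ.Xc (k + 1) - Λ.Xc k) * q ≤
      (Λ.Yc k - Λ.Yc (k + 1)) * Λ.Xc k + (Λ.Xc (k + 1) - Λ.Xc k) * Λ.Yc k) :
    (p, q) ∈ Λ.region := by
  refine ⟨h0p, h0q, Or.inr ⟨⟨k, hk⟩, ?_, ?_, ?_, ?_⟩⟩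
  · rw [Λ.P_cs hk]; exact h1
  · rw [Λ.P_s hk]; exact h2
  · rw [Λ.P_cs hk]; exact h3
  · rw [Λ.P_cs hk, Λ.run_eq hk, Λ.drop_eq hk]; exact h4

lemma npos (hA : 0 < Λ.x) : 1 ≤ Λ.n := by
  by_contra h
  have hn : Λ.n = 0 := by omega
  have : Λ.Xc Λ.n = Λ.x := Λ.Xc_of_le le_rfl
  rw [hn, Λ.Xc_zero] at this
  omega

/-- the triangle with legs `x(Λ)`, `y(Λ)` is contained in the region of `Λ` -/
lemma triangle_subset (hA : 0 < Λ.x) (hB : 0 < Λ.y) (p q : ℤ)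
    (h0p : 0 ≤ p) (h0q : 0 ≤ q) (hpa : p ≤ Λ.x)
    (hline : Λ.y * p + Λ.x * q ≤ Λ.x * Λ.y) : (p, q) ∈ Λ.region := by
  obtain ⟨k, hk, hXk, hXk1⟩ := ivt_aux Λ.Xc p Λ.n (Λ.npos hA)
    (by rw [Λ.Xc_zero]; exact h0p) (by rw [Λ.Xc_of_le le_rfl]; exact hpa) Λ.Xc_step
  have hFk := Λ.above_chord hA hB k
  have hFk1 := Λ.above_chord hA hB (k + 1)
  set A := Λ.x
  set B := Λ.y
  have hqY : q ≤ Λ.Yc k := by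
    have h5 : A * q ≤ A * Λ.Yc k := by nlinarith
    exact le_of_mul_le_mul_left h5 hA
  apply Λ.mem_region_of hk p q h0p h0q hXk hXk1 hqY
  set r := Λ.Xc (k + 1) - Λ.Xc k with hr
  set d := Λ.Yc k - Λ.Yc (k + 1) with hd
  have hr0 : 0 ≤ r := by have := Λ.Xc_step k; omega
  have hd0 : 0 ≤ d := by have := Λ.Yc_step k; omega
  have hs0 : 0 ≤ p - Λ.Xc k := by omega
  have hrs : 0 ≤ r - (p - Λ.Xc k) := by omega
  -- goal : d * p + r * q ≤ d * Xc k + r * Yc k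
  rcases le_or_gt (A * d) (B * r) with ht | ht
  · -- use the left endpoint
    have hbs : B * (p - Λ.Xc k) + A * q ≤ A * Λ.Yc k := by nlinarith
    have key : A * (d * (p - Λ.Xc k)) ≤ A * (r * (Λ.Yc k - q)) := by
      nlinarith [mul_le_mul_of_nonneg_right ht hs0,
        mul_le_mul_of_nonneg_left hbs hr0]
    have := le_of_mul_le_mul_left key hA
    nlinarith [this]
  · -- use the right endpoint
    have hbs : A * (Λ.Yc k - q) ≥ A * d - B * (r - (p - Λ.Xc k)) := by
      have : B * (Λ.Xc k + r) + A * (Λ.Yc k - d) ≥ A * B := by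
        have := hFk1; nlinarith
      nlinarith
    have key : A * (d * (p - Λ.Xc k)) ≤ A * (r * (Λ.Yc k - q)) := by
      nlinarith [mul_le_mul_of_nonneg_left hbs hr0,
        mul_nonneg (mul_nonneg hrs (sub_nonneg.mpr ht.le)) hrs,
        mul_le_mul_of_nonneg_left ht.le hrs]
    have := le_of_mul_le_mul_left key hA
    nlinarith [this]

lemma region_subset_box : Λ.region ⊆ Set.Icc (0, 0) (Λ.x, Λ.y) := by
  rintro ⟨p, q⟩ ⟨h0p, h0q, hc⟩
  have hxnn : 0 ≤ Λ.x := Λ.x_nonneg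
  have hynn : 0 ≤ Λ.y := Λ.y_nonneg
  rw [Set.mem_Icc, Prod.le_def, Prod.le_def]
  rcases hc with ⟨hp0, hq⟩ | ⟨i, ha1, ha2, ha3, _⟩
  · dsimp only at hp0 hq ⊢
    exact ⟨⟨h0p, h0q⟩, by omega, hq⟩
  · have hi : (i : ℕ) < Λ.n := i.isLt
    have e1 : Λ.P i.castSucc = (Λ.Xc i, Λ.Yc i) := by
      have : i = (⟨(i : ℕ), hi⟩ : Fin Λ.n) := by apply Fin.ext; rfl
      rw [this]; exact Λ.P_cs hi
    have e2 : Λ.P i.succ = (Λ.Xc ((i : ℕ) + 1), Λ.Yc ((i : ℕ) + 1)) := by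
      have : i = (⟨(i : ℕ), hi⟩ : Fin Λ.n) := by apply Fin.ext; rfl
      rw [this]; exact Λ.P_s hi
    rw [e2] at ha2
    rw [e1] at ha3
    have hxb : Λ.Xc ((i : ℕ) + 1) ≤ Λ.x := by
      rw [← Λ.Xc_of_le (le_refl Λ.n)]; exact Λ.Xc_mono (by omega)
    have hyb : Λ.Yc (i : ℕ) ≤ Λ.y := by
      rw [← Λ.Yc_zero]; exact Λ.Yc_anti (by omega)
    exact ⟨⟨h0p, h0q⟩, ⟨by dsimp at ha2 ⊢; omega, by dsimp at ha3 ⊢; omega⟩⟩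

lemma region_finite : Λ.region.Finite :=
  Set.Finite.subset (Set.finite_Icc _ _) Λ.region_subset_box

end ConvexGenerator

lemma region_eGen (a b : ℤ) (ha : 0 < a) (hb : 0 < b) :
    (eGen a b ha hb).region =
      {q : ℤ × ℤ | 0 ≤ q.1 ∧ 0 ≤ q.2 ∧ q.1 ≤ a ∧ b * q.1 + a * q.2 ≤ a * b} := by
  have hn1 : (eGen a b ha hb).n = 1 := rfl
  set E := eGen a b ha hb with hE
  let i0 : Fin E.n := ⟨0, by omega⟩
  have hP0 : E.P i0.castSucc = (0, b) := rfl
  have hP1 : E.P i0.succ = (a, 0) := rfl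
  have hrun : E.run i0 = a := by show a - 0 = a; ring
  have hdrop : E.drop i0 = b := by show b - 0 = b; ring
  have hy : E.y = b := rfl
  ext ⟨p, q⟩
  simp only [ConvexGenerator.region, Set.mem_setOf_eq]
  constructor
  · rintro ⟨h0p, h0q, hc⟩
    rcases hc with ⟨hp0, hq⟩ | ⟨i, h1, h2, h3, h4⟩
    · try dsimp only at hp0 hq ⊢
      rw [hy] at hq
      refine ⟨h0p, h0q, by omega, ?_⟩
      rw [hp0]; nlinarith
    · have hi : i = i0 := Fin.ext (by have := i.isLt; omega)
      subst hi
      rw [hP0] at h1 h3 h4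
      rw [hP1] at h2
      rw [hrun, hdrop] at h4
      try dsimp only at h1 h2 h3 h4 ⊢
      refine ⟨h0p, h0q, h2, by nlinarith⟩
  · rintro ⟨h0p, h0q, hpa, hline⟩
    refine ⟨h0p, h0q, Or.inr ⟨i0, ?_, ?_, ?_, ?_⟩⟩
    · rw [hP0]; exact h0p
    · rw [hP1]; exact hpa
    · rw [hP0]; try dsimp only; nlinarith
    · rw [hP0, hrun, hdrop]; try dsimp only; nlinarith

lemma hCount_eGen (a b : ℤ) (ha : 0 < a) (hb : 0 < b) : (eGen a b ha hb).hCount = 0 := by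
  simp [ConvexGenerator.hCount, eGen]

end Aux3


section Aux4

lemma cg_eq_eGen (Λ : ConvexGenerator) (a b : ℤ) (ha : 0 < a) (hb : 0 < b)
    (hn : Λ.n = 1)
    (hP : ∀ i : Fin (Λ.n + 1), Λ.P i = if (i : ℕ) = 0 then ((0 : ℤ), b) else (a, 0))
    (hl : ∀ i : Fin Λ.n, Λ.label i = false) :
    Λ = eGen a b ha hb := by
  obtain ⟨n, P, label, h1, h2, h3, h4, h5, h6, h7, h8⟩ := Λ
  dsimp only at hn hP hl
  subst hn
  have hP' : P = fun i : Fin 2 => if (i : ℕ) = 0 then ((0 : ℤ), b) else (a, 0) :=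
    funext hP
  have hl' : label = fun _ => false := funext hl
  subst hP'
  subst hl'
  rfl

end Aux4

/-- a convex generator `Λ` with `Î(Λ) = Î(e_{a,b})`, `x(Λ) ≤ a`, `y(Λ) ≤ b`,
admitting an integer `g ≥ 0` with `2(x(Λ) − a + y(Λ) − b) + e(Λ) − 1 ≥ 2g − 1 + e(Λ) + h(Λ)`,
must satisfy `g = 0`, `h(Λ) = 0`, `x(Λ) = a`, `y(Λ) = b`, `L̂(Λ) = L̂(e_{a,b})`, and
`Λ = e_{a,b}`. -/
theorem eq_eGen_of_index_constraints (a b : ℤ) (ha : 0 < a) (hb : 0 < b)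
    (hab : Int.gcd a b = 1) (Λ : ConvexGenerator)
    (hI : Λ.Ihat = (eGen a b ha hb).Ihat)
    (hx : Λ.x ≤ a) (hy : Λ.y ≤ b)
    (g : ℤ) (hg : 0 ≤ g)
    (hineq : 2 * g - 1 + (Λ.eCount : ℤ) + (Λ.hCount : ℤ) ≤
      2 * (Λ.x - a + Λ.y - b) + (Λ.eCount : ℤ) - 1) :
    g = 0 ∧ Λ.hCount = 0 ∧ Λ.x = a ∧ Λ.y = b ∧
      Λ.Lhat = (eGen a b ha hb).Lhat ∧ Λ = eGen a b ha hb := by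
  have harith : g = 0 ∧ (Λ.hCount : ℤ) = 0 ∧ Λ.x = a ∧ Λ.y = b := by omega
  obtain ⟨hg0, hh0, hx', hy'⟩ := harith
  have hh : Λ.hCount = 0 := by exact_mod_cast hh0
  have hhe : (eGen a b ha hb).hCount = 0 := hCount_eGen a b ha hb
  rw [ConvexGenerator.Ihat, ConvexGenerator.Ihat, hh, hhe] at hI
  have hL : Λ.Lhat = (eGen a b ha hb).Lhat := by
    push_cast at hI; omega
  refine ⟨hg0, hh, hx', hy', hL, ?_⟩
  have hA : 0 < Λ.x := by omega
  have hB : 0 < Λ.y := by omega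
  -- the triangle is contained in the region of Λ
  have hsub : (eGen a b ha hb).region ⊆ Λ.region := by
    rintro ⟨p, q⟩ hpq
    rw [region_eGen] at hpq
    obtain ⟨h0p, h0q, hpa, hline⟩ := hpq
    exact Λ.triangle_subset hA hB p q h0p h0q (by omega)
      (by rw [hx', hy']; nlinarith)
  -- Λ has exactly one edge
  have hn1 : Λ.n = 1 := by
    have hnp := Λ.npos hA
    by_contra hcon
    have hn2 : 2 ≤ Λ.n := by omega
    have h0X : 0 ≤ Λ.Xc 1 := by
      have := Λ.Xc_step 0
      rw [Λ.Xc_zero] at this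
      exact this
    have h0Y : 0 ≤ Λ.Yc 1 := by
      have h := Λ.Yc_anti (show 1 ≤ Λ.n by omega)
      rw [Λ.Yc_of_le le_rfl] at h
      exact h
    have hin : (Λ.Xc 1, Λ.Yc 1) ∈ Λ.region := by
      apply Λ.mem_region_of (show 0 < Λ.n by omega) (Λ.Xc 1) (Λ.Yc 1) h0X h0Y
        (Λ.Xc_step 0) le_rfl (Λ.Yc_step 0)
      exact le_of_eq (by ring)
    have hnotin : (Λ.Xc 1, Λ.Yc 1) ∉ (eGen a b ha hb).region := by
      rw [region_eGen]
      rintro ⟨-, -, -, hcon2⟩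
      have hfv := Λ.first_vertex hA hB hn2
      rw [hx', hy'] at hfv
      dsimp only at hcon2
      nlinarith
    have hne : (eGen a b ha hb).region ≠ Λ.region := by
      intro heq
      rw [heq] at hnotin
      exact hnotin hin
    have hss : (eGen a b ha hb).region ⊂ Λ.region :=
      Set.ssubset_iff_subset_ne.mpr ⟨hsub, hne⟩
    have hlt := Set.ncard_lt_ncard hss Λ.region_finite
    rw [ConvexGenerator.Lhat, ConvexGenerator.Lhat] at hL
    omega
  -- identify the vertices and the label
  have hXc1 : Λ.Xc 1 = a := by rw [Λ.Xc_of_le (by omega), hx']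
  have hYc1 : Λ.Yc 1 = 0 := Λ.Yc_of_le (by omega)
  apply cg_eq_eGen Λ a b ha hb hn1
  · intro i
    have hi : (i : ℕ) = 0 ∨ (i : ℕ) = 1 := by have := i.isLt; omega
    rcases hi with hi | hi
    · have : i = 0 := Fin.ext (by simp [hi])
      subst this
      rw [if_pos (by simp)]
      have e1 : (Λ.P 0).1 = 0 := Λ.startX
      have e2 : (Λ.P 0).2 = b := by rw [← hy']; rfl
      exact Prod.ext e1 e2
    · have : i = Fin.last Λ.n := Fin.ext (by simp [hi, Fin.val_last]; omega)
      subst this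
      rw [if_neg (by simp [Fin.val_last]; omega)]
      have e1 : (Λ.P (Fin.last Λ.n)).1 = a := by rw [← hx']; rfl
      have e2 : (Λ.P (Fin.last Λ.n)).2 = 0 := Λ.endY
      exact Prod.ext e1 e2
  · intro i
    have hcard : (Finset.univ.filter fun j => Λ.label j = true).card = 0 := hh
    rw [Finset.card_eq_zero] at hcard
    have := Finset.eq_empty_iff_forall_notMem.mp hcard i
    simp only [Finset.mem_filter, Finset.mem_univ, true_and] at this
    exact Bool.not_eq_true _ ▸ this
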